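/- Fix 0 < δ < 1 and B > 0. Let h : ℝ → ℝ be a smooth function satisfying 0 ≤ h(τ) ≤ 1 for all τ, h(τ) = 1 for |τ| ≤ δ/2, and h(τ) = 0 for |τ| > δ, and set γ(τ) = h(τ) + τ·tanh(B·τ), a smooth strictly positive function on ℝ. Then for every real exponent p and every natural number k there exists a constant C = C(p,k) > 0 such that for all τ ∈ ℝ, |d^k/dτ^k (γ(τ)^p)| ≤ C·(1 + |τ|)^(p − k). (This is the one-dimensional radial form of the claim that γ^p(|ξ|) is a symbol of class S^p, Lemma on the family of operators G^p.) -/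

import Mathlib

/-!
The symbol `γ(τ) = h(τ) + τ tanh(Bτ)` has order 1: the cutoff `h` is smooth with compact
support, `τ` has order 1, and every derivative of `tanh` of positive order is a polynomial in
`tanh` times `1 - tanh² = sech²`, which decays exponentially, so `tanh(Bτ)` has order 0. It is
also elliptic, `γ(τ) ≥ c (1 + |τ|)`: near `0` the cutoff equals `1`, and away from `0` the term
`τ tanh(Bτ)` grows linearly. For an elliptic symbol of order 1, the two-sided comparison
`γ ≍ 1 + |τ|` bounds `γ^p`, and `(γ^p)' = p γ^(p-1) γ'` together with the Leibniz rule bounds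
the derivatives of order `n + 1` of `γ^p` by those of order `≤ n` of `γ^(p-1)`; the induction
on `n` therefore runs over all exponents `p` at once.
-/

open Real Polynomial
open scoped ContDiff Nat

namespace Real

theorem rpow_le_max_mul_rpow {c C w x : ℝ} (hc : 0 < c) (hw : 0 < w)
    (hlow : c * w ≤ x) (hup : x ≤ C * w) (p : ℝ) :
    x ^ p ≤ max (c ^ p) (C ^ p) * w ^ p := by
  have hcw : 0 < c * w := mul_pos hc hw
  rcases le_total 0 p with hp | hp
  · have hC : 0 ≤ C := by nlinarith
    calc x ^ p ≤ (C * w) ^ p := by gcongr; linarith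
      _ = C ^ p * w ^ p := mul_rpow hC hw.le
      _ ≤ max (c ^ p) (C ^ p) * w ^ p := by gcongr; exact le_max_right _ _
  · calc x ^ p ≤ (c * w) ^ p := rpow_le_rpow_of_nonpos (by positivity) hlow hp
      _ = c ^ p * w ^ p := mul_rpow hc.le hw.le
      _ ≤ max (c ^ p) (C ^ p) * w ^ p := by gcongr; exact le_max_left _ _

theorem exp_neg_mul_le_mul_rpow {a x : ℝ} (ha : 0 < a) (hx : 0 ≤ x) (n : ℕ) :
    exp (-(a * x)) ≤ n ! * exp a / a ^ n * (1 + x) ^ (-(n : ℝ)) := by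
  have key := pow_div_factorial_le_exp (x := a * (1 + x)) (by positivity) n
  rw [mul_pow, div_le_iff₀ (by positivity), mul_add, mul_one, exp_add] at key
  rw [rpow_neg (by positivity), rpow_natCast, le_mul_inv_iff₀ (by positivity),
    le_div_iff₀ (by positivity)]
  calc exp (-(a * x)) * (1 + x) ^ n * a ^ n = exp (-(a * x)) * (a ^ n * (1 + x) ^ n) := by ring
    _ ≤ exp (-(a * x)) * (exp a * exp (a * x) * n !) := by gcongr
    _ = n ! * exp a * (exp (-(a * x)) * exp (a * x)) := by ring
    _ = n ! * exp a := by rw [← exp_add, neg_add_cancel, exp_zero, mul_one]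

theorem one_sub_tanh_sq (x : ℝ) : 1 - tanh x ^ 2 = (cosh x ^ 2)⁻¹ := by
  rw [tanh_eq_sinh_div_cosh, div_pow]
  field_simp
  linarith [cosh_sq x]

theorem hasDerivAt_tanh (x : ℝ) : HasDerivAt tanh (1 - tanh x ^ 2) x := by
  have h := (hasDerivAt_sinh x).div (hasDerivAt_cosh x) (cosh_pos x).ne'
  rw [one_sub_tanh_sq, funext tanh_eq_sinh_div_cosh]
  refine h.congr_deriv ?_
  rw [← one_div, ← sq, ← sq, cosh_sq, add_sub_cancel_left]

theorem contDiff_tanh : ContDiff ℝ ∞ tanh := by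
  rw [funext tanh_eq_sinh_div_cosh]
  exact contDiff_sinh.div contDiff_cosh fun x => (cosh_pos x).ne'

theorem strictMono_tanh : StrictMono tanh :=
  strictMono_of_deriv_pos fun x => by
    rw [(hasDerivAt_tanh x).deriv]
    linarith [tanh_sq_lt_one x]

theorem one_sub_tanh_sq_le (x : ℝ) : 1 - tanh x ^ 2 ≤ 4 * exp (-(2 * |x|)) := by
  have hcosh : exp |x| / 2 ≤ cosh x := by
    rw [← cosh_abs, cosh_eq]
    linarith [exp_pos (-|x|)]
  rw [one_sub_tanh_sq]
  calc (cosh x ^ 2)⁻¹ ≤ ((exp |x| / 2) ^ 2)⁻¹ := by gcongr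
    _ = 4 * exp (-(2 * |x|)) := by
      rw [exp_neg, show 2 * |x| = |x| + |x| by ring, exp_add]
      field_simp
      norm_num

noncomputable def tanhDerivPoly : ℕ → ℝ[X]
  | 0 => X
  | n + 1 => derivative (tanhDerivPoly n) * (1 - X ^ 2)

theorem iteratedDeriv_tanh (n : ℕ) :
    iteratedDeriv n tanh = fun x => (tanhDerivPoly n).eval (tanh x) := by
  induction n with
  | zero => simp [tanhDerivPoly]
  | succ n ih =>
    ext x
    rw [iteratedDeriv_succ, ih]
    refine (((tanhDerivPoly n).hasDerivAt (tanh x)).comp x (hasDerivAt_tanh x)).deriv.trans ?_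
    simp [tanhDerivPoly]

theorem exists_abs_iteratedDeriv_succ_tanh_le (n : ℕ) :
    ∃ M, 0 ≤ M ∧ ∀ x, |iteratedDeriv (n + 1) tanh x| ≤ M * exp (-(2 * |x|)) := by
  obtain ⟨M, hM⟩ := (isCompact_Icc (a := (-1 : ℝ)) (b := 1)).exists_bound_of_continuousOn
    (derivative (tanhDerivPoly n)).continuous.continuousOn
  refine ⟨4 * M, by linarith [(norm_nonneg _).trans (hM 0 (by norm_num))], fun x => ?_⟩
  have hx : tanh x ∈ Set.Icc (-1 : ℝ) 1 := ⟨(neg_one_lt_tanh x).le, (tanh_lt_one x).le⟩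
  have hsech : 0 ≤ 1 - tanh x ^ 2 := by linarith [tanh_sq_lt_one x]
  simp only [iteratedDeriv_tanh, tanhDerivPoly, eval_mul, eval_sub, eval_one, eval_pow, eval_X,
    abs_mul, abs_of_nonneg hsech]
  calc |(derivative (tanhDerivPoly n)).eval (tanh x)| * (1 - tanh x ^ 2)
      ≤ M * (4 * exp (-(2 * |x|))) := by
        gcongr
        · exact (norm_nonneg _).trans (hM _ hx)
        · exact hM _ hx
        · exact one_sub_tanh_sq_le x
    _ = 4 * M * exp (-(2 * |x|)) := by ring

end Real

def SymbolBound (n : ℕ) (m : ℝ) (f : ℝ → ℝ) : Prop :=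
  ∃ C, ∀ j ≤ n, ∀ τ, |iteratedDeriv j f τ| ≤ C * (1 + |τ|) ^ (m - j)

/-- The symbol class `S^m` in one variable. -/
structure IsSymbol (m : ℝ) (f : ℝ → ℝ) : Prop where
  contDiff : ContDiff ℝ ∞ f
  bound : ∀ k : ℕ, ∃ C, ∀ τ, |iteratedDeriv k f τ| ≤ C * (1 + |τ|) ^ (m - k)

section SymbolBound

variable {n : ℕ} {m a b : ℝ} {f g : ℝ → ℝ}

theorem symbolBound_zero_iff :
    SymbolBound 0 m f ↔ ∃ C, ∀ τ, |f τ| ≤ C * (1 + |τ|) ^ m := by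
  constructor
  · rintro ⟨C, hC⟩
    exact ⟨C, fun τ => by simpa using hC 0 le_rfl τ⟩
  · rintro ⟨C, hC⟩
    exact ⟨C, fun j hj τ => by simpa [Nat.le_zero.1 hj] using hC τ⟩

theorem symbolBound_succ_iff :
    SymbolBound (n + 1) m f ↔ SymbolBound 0 m f ∧ SymbolBound n (m - 1) (deriv f) := by
  have hexp : ∀ j : ℕ, m - 1 - j = m - (j + 1 : ℕ) := fun j => by push_cast; ring
  constructor
  · rintro ⟨C, hC⟩
    refine ⟨⟨C, fun j hj => hC j (hj.trans (Nat.zero_le _))⟩, ⟨C, fun j hj τ => ?_⟩⟩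
    rw [hexp, ← iteratedDeriv_succ']
    exact hC (j + 1) (by omega) τ
  · rintro ⟨⟨C, hC⟩, ⟨D, hD⟩⟩
    refine ⟨max C D, fun j hj τ => ?_⟩
    rcases j with _ | j
    · exact (hC 0 le_rfl τ).trans (by gcongr; exact le_max_left _ _)
    · rw [iteratedDeriv_succ', ← hexp]
      exact (hD j (by omega) τ).trans (by gcongr; exact le_max_right _ _)

theorem SymbolBound.const_mul (hf : SymbolBound n m f) (c : ℝ) :
    SymbolBound n m (fun τ => c * f τ) := by
  obtain ⟨C, hC⟩ := hf
  refine ⟨|c| * C, fun j hj τ => ?_⟩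
  rw [iteratedDeriv_const_mul_field, abs_mul, mul_assoc]
  exact mul_le_mul_of_nonneg_left (hC j hj τ) (abs_nonneg c)

theorem SymbolBound.mul (hfb : SymbolBound n a f) (hgb : SymbolBound n b g)
    (hf : ContDiff ℝ n f) (hg : ContDiff ℝ n g) :
    SymbolBound n (a + b) (fun τ => f τ * g τ) := by
  obtain ⟨C, hC⟩ := hfb
  obtain ⟨D, hD⟩ := hgb
  refine ⟨2 ^ n * (|C| * |D|), fun j hj τ => ?_⟩
  have hw : 0 < 1 + |τ| := by positivity
  have hterm : ∀ i ∈ Finset.range (j + 1),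
      |(j.choose i : ℝ) * iteratedDeriv i f τ * iteratedDeriv (j - i) g τ|
        ≤ j.choose i * (|C| * |D|) * (1 + |τ|) ^ (a + b - j) := by
    intro i hi
    have hij : i ≤ j := Nat.lt_succ_iff.mp (Finset.mem_range.mp hi)
    have hexp : (1 + |τ|) ^ (a + b - j)
        = (1 + |τ|) ^ (a - i) * (1 + |τ|) ^ (b - (j - i : ℕ)) := by
      rw [← rpow_add hw, Nat.cast_sub hij]
      ring_nf
    have hfi : |iteratedDeriv i f τ| ≤ |C| * (1 + |τ|) ^ (a - i) :=
      (hC i (hij.trans hj) τ).trans (by gcongr; exact le_abs_self C)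
    have hgi : |iteratedDeriv (j - i) g τ| ≤ |D| * (1 + |τ|) ^ (b - (j - i : ℕ)) :=
      (hD (j - i) ((Nat.sub_le j i).trans hj) τ).trans (by gcongr; exact le_abs_self D)
    rw [abs_mul, abs_mul, Nat.abs_cast, hexp]
    calc (j.choose i : ℝ) * |iteratedDeriv i f τ| * |iteratedDeriv (j - i) g τ|
        ≤ j.choose i * (|C| * (1 + |τ|) ^ (a - i))
            * (|D| * (1 + |τ|) ^ (b - (j - i : ℕ))) := by
          gcongr
      _ = _ := by ring
  have hj' : (j : WithTop ℕ∞) ≤ n := by exact_mod_cast hj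
  calc |iteratedDeriv j (fun τ => f τ * g τ) τ|
      = |∑ i ∈ Finset.range (j + 1),
          (j.choose i : ℝ) * iteratedDeriv i f τ * iteratedDeriv (j - i) g τ| := by
        rw [iteratedDeriv_fun_mul ((hf.of_le hj').contDiffAt) ((hg.of_le hj').contDiffAt)]
    _ ≤ ∑ i ∈ Finset.range (j + 1),
          (j.choose i : ℝ) * (|C| * |D|) * (1 + |τ|) ^ (a + b - j) :=
        (Finset.abs_sum_le_sum_abs _ _).trans (Finset.sum_le_sum hterm)
    _ = 2 ^ j * (|C| * |D|) * (1 + |τ|) ^ (a + b - j) := by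
        rw [← Finset.sum_mul, ← Finset.sum_mul, ← Nat.cast_sum, Nat.sum_range_choose]
        push_cast
        ring
    _ ≤ 2 ^ n * (|C| * |D|) * (1 + |τ|) ^ (a + b - j) := by
        gcongr
        norm_num

end SymbolBound

namespace IsSymbol

variable {m a b : ℝ} {f g : ℝ → ℝ}

theorem of_symbolBound (hf : ContDiff ℝ ∞ f) (h : ∀ n, SymbolBound n m f) : IsSymbol m f where
  contDiff := hf
  bound k := by
    obtain ⟨C, hC⟩ := h k
    exact ⟨C, hC k le_rfl⟩

theorem symbolBound (hf : IsSymbol m f) (n : ℕ) : SymbolBound n m f := by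
  induction n with
  | zero =>
    obtain ⟨C, hC⟩ := hf.bound 0
    exact ⟨C, fun j hj => by rwa [Nat.le_zero.1 hj]⟩
  | succ n ih =>
    obtain ⟨C, hC⟩ := ih
    obtain ⟨D, hD⟩ := hf.bound (n + 1)
    refine ⟨max C D, fun j hj τ => ?_⟩
    rcases Nat.of_le_succ hj with hj | rfl
    · exact (hC j hj τ).trans (by gcongr; exact le_max_left _ _)
    · exact (hD τ).trans (by gcongr; exact le_max_right _ _)

theorem add (hf : IsSymbol m f) (hg : IsSymbol m g) : IsSymbol m (fun τ => f τ + g τ) where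
  contDiff := hf.contDiff.add hg.contDiff
  bound k := by
    obtain ⟨C, hC⟩ := hf.bound k
    obtain ⟨D, hD⟩ := hg.bound k
    refine ⟨C + D, fun τ => ?_⟩
    rw [iteratedDeriv_fun_add (contDiff_infty.1 hf.contDiff k).contDiffAt
      (contDiff_infty.1 hg.contDiff k).contDiffAt, add_mul]
    exact (abs_add_le _ _).trans (add_le_add (hC τ) (hD τ))

theorem mul (hf : IsSymbol a f) (hg : IsSymbol b g) : IsSymbol (a + b) (fun τ => f τ * g τ) :=
  of_symbolBound (hf.contDiff.mul hg.contDiff) fun n =>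
    (hf.symbolBound n).mul (hg.symbolBound n) (contDiff_infty.1 hf.contDiff n)
      (contDiff_infty.1 hg.contDiff n)

end IsSymbol

theorem isSymbol_id : IsSymbol 1 (fun τ : ℝ => τ) where
  contDiff := contDiff_id
  bound k := ⟨1, fun τ => by
    rw [iteratedDeriv_fun_id, one_mul]
    rcases k with _ | _ | k
    · simp
    · simp
    · simp only [if_neg (by omega : k + 2 ≠ 0), if_neg (by omega : k + 2 ≠ 1), abs_zero]
      positivity⟩

theorem HasCompactSupport.isSymbol {f : ℝ → ℝ} (hf : ContDiff ℝ ∞ f)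
    (hsupp : HasCompactSupport f) (m : ℝ) : IsSymbol m f where
  contDiff := hf
  bound k := by
    set w : ℝ → ℝ := fun τ => (1 + |τ|) ^ (-(m - k))
    have hw : Continuous w :=
      (continuous_const.add continuous_abs).rpow_const fun τ =>
        Or.inl (by positivity : 1 + |τ| ≠ 0)
    have hderiv : HasCompactSupport (iteratedDeriv k f) :=
      (hsupp.iteratedFDeriv k).comp_left
        (g := fun L : ContinuousMultilinearMap ℝ (fun _ : Fin k => ℝ) ℝ => L fun _ => 1) rfl
    obtain ⟨C, hC⟩ := ((hf.continuous_iteratedDeriv k (mod_cast le_top)).mul hw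
      |>.bounded_above_of_compact_support (hderiv.mul_right (f' := w)))
    refine ⟨C, fun τ => ?_⟩
    have hτ : 0 < 1 + |τ| := by positivity
    have := hC τ
    rwa [Pi.mul_apply, norm_mul, norm_eq_abs, norm_of_nonneg (rpow_nonneg hτ.le _),
      rpow_neg hτ.le, ← div_eq_mul_inv, div_le_iff₀ (rpow_pos_of_pos hτ _)] at this

theorem isSymbol_tanh_const_mul {B : ℝ} (hB : B ≠ 0) :
    IsSymbol 0 (fun τ => tanh (B * τ)) where
  contDiff := contDiff_tanh.comp (contDiff_const.mul contDiff_id)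
  bound
  | 0 => ⟨1, fun τ => by simpa using (abs_tanh_lt_one _).le⟩
  | n + 1 => by
    obtain ⟨M, hM0, hM⟩ := exists_abs_iteratedDeriv_succ_tanh_le n
    have ha : 0 < 2 * |B| := by positivity
    refine ⟨|B| ^ (n + 1) * M * ((n + 1)! * exp (2 * |B|) / (2 * |B|) ^ (n + 1)), fun τ => ?_⟩
    rw [iteratedDeriv_comp_const_mul (contDiff_infty.1 contDiff_tanh _), abs_mul, abs_pow,
      zero_sub]
    calc |B| ^ (n + 1) * |iteratedDeriv (n + 1) tanh (B * τ)|
        ≤ |B| ^ (n + 1) * (M * exp (-(2 * |B| * |τ|))) := by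
          gcongr
          simpa only [abs_mul, mul_assoc] using hM (B * τ)
      _ ≤ |B| ^ (n + 1) * (M * ((n + 1)! * exp (2 * |B|) / (2 * |B|) ^ (n + 1)
            * (1 + |τ|) ^ (-((n + 1 : ℕ) : ℝ)))) := by
          gcongr
          exact exp_neg_mul_le_mul_rpow ha (abs_nonneg τ) (n + 1)
      _ = _ := by ring

theorem IsSymbol.rpow {γ : ℝ → ℝ} {c : ℝ} (hγ : IsSymbol 1 γ) (hc : 0 < c)
    (hlow : ∀ τ, c * (1 + |τ|) ≤ γ τ) (p : ℝ) : IsSymbol p (fun τ => γ τ ^ p) := by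
  have hpos : ∀ τ, 0 < γ τ := fun τ => (by positivity : 0 < c * (1 + |τ|)).trans_le (hlow τ)
  have hsmooth : ∀ q : ℝ, ContDiff ℝ ∞ (fun τ => γ τ ^ q) := fun q =>
    hγ.contDiff.rpow_const_of_ne fun τ => (hpos τ).ne'
  have hderiv : ∀ q : ℝ,
      deriv (fun τ => γ τ ^ q) = fun τ => q * (γ τ ^ (q - 1) * deriv γ τ) :=
    fun q => funext fun τ => by
      rw [((hγ.contDiff.differentiable (by simp) τ).hasDerivAt.rpow_const
        (Or.inl (hpos τ).ne')).deriv]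
      ring
  have hbase : ∀ q : ℝ, SymbolBound 0 q (fun τ => γ τ ^ q) := fun q => by
    obtain ⟨C, hC⟩ := hγ.bound 0
    refine symbolBound_zero_iff.2 ⟨max (c ^ q) (C ^ q), fun τ => ?_⟩
    rw [abs_of_pos (rpow_pos_of_pos (hpos τ) q)]
    refine rpow_le_max_mul_rpow hc (by positivity) (hlow τ) ?_ q
    simpa using (le_abs_self _).trans (hC τ)
  have hbound : ∀ n : ℕ, ∀ q : ℝ, SymbolBound n q (fun τ => γ τ ^ q) := by
    intro n
    induction n with
    | zero => exact hbase
    | succ n ih =>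
      intro q
      refine symbolBound_succ_iff.2 ⟨hbase q, ?_⟩
      have hγ' := (symbolBound_succ_iff.1 (hγ.symbolBound (n + 1))).2
      have := ((ih (q - 1)).mul hγ' (contDiff_infty.1 (hsmooth _) n)
        (contDiff_infty.1 (contDiff_infty_iff_deriv.1 hγ.contDiff).2 n)).const_mul q
      rw [hderiv]
      simpa using this
  exact .of_symbolBound (hsmooth p) fun n => hbound n p

theorem exists_mul_one_add_abs_le_add_mul_tanh {δ B : ℝ} {h : ℝ → ℝ} (hδ : 0 < δ)
    (hB : 0 < B) (hnonneg : ∀ τ, 0 ≤ h τ) (hone : ∀ τ, |τ| ≤ δ / 2 → h τ = 1) :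
    ∃ c, 0 < c ∧ ∀ τ, c * (1 + |τ|) ≤ h τ + τ * tanh (B * τ) := by
  have ha : 0 < tanh (B * (δ / 2)) := by
    simpa using strictMono_tanh (by positivity : (0 : ℝ) < B * (δ / 2))
  have hodd : ∀ τ, τ * tanh (B * τ) = |τ| * tanh (B * |τ|) := fun τ => by
    rcases abs_choice τ with hτ | hτ <;> rw [hτ]
    rw [mul_neg, tanh_neg, neg_mul_neg]
  have htanh : ∀ τ, 0 ≤ |τ| * tanh (B * |τ|) := fun τ =>
    mul_nonneg (abs_nonneg τ)
      (by simpa using strictMono_tanh.monotone (by positivity : 0 ≤ B * |τ|))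
  refine ⟨min 1 (tanh (B * (δ / 2)) * δ) / (2 + δ), by positivity, fun τ => ?_⟩
  rw [hodd]
  rcases le_or_gt |τ| (δ / 2) with hτ | hτ
  · calc min 1 (tanh (B * (δ / 2)) * δ) / (2 + δ) * (1 + |τ|) ≤ 1 / (2 + δ) * (2 + δ) :=
          mul_le_mul (by gcongr; exact min_le_left _ _) (by linarith) (by positivity)
            (by positivity)
      _ = 1 := by field_simp
      _ ≤ h τ + |τ| * tanh (B * |τ|) := by linarith [hone τ hτ, htanh τ]
  · calc min 1 (tanh (B * (δ / 2)) * δ) / (2 + δ) * (1 + |τ|)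
          ≤ tanh (B * (δ / 2)) * δ / (2 + δ) * (1 + |τ|) := by
          gcongr
          exact min_le_right _ _
      _ ≤ tanh (B * (δ / 2)) * |τ| := by
          rw [div_mul_eq_mul_div, div_le_iff₀ (by positivity)]
          nlinarith
      _ ≤ tanh (B * |τ|) * |τ| := by
          gcongr
          exact strictMono_tanh.monotone (by gcongr)
      _ ≤ h τ + |τ| * tanh (B * |τ|) := by linarith [hnonneg τ]

theorem stmt_6_general (δ B : ℝ) (hδ0 : 0 < δ) (hB : 0 < B)
    (h : ℝ → ℝ) (hsmooth : ContDiff ℝ (⊤ : ℕ∞) h)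
    (h01 : ∀ τ, 0 ≤ h τ ∧ h τ ≤ 1)
    (hone : ∀ τ, |τ| ≤ δ / 2 → h τ = 1)
    (hzero : ∀ τ, δ < |τ| → h τ = 0)
    (p : ℝ) (k : ℕ) :
    ∃ C : ℝ, 0 < C ∧ ∀ τ : ℝ,
      |iteratedDeriv k (fun τ : ℝ => (h τ + τ * Real.tanh (B * τ)) ^ p) τ|
        ≤ C * (1 + |τ|) ^ (p - (k : ℝ)) := by
  obtain ⟨c, hc, hlow⟩ :=
    exists_mul_one_add_abs_le_add_mul_tanh hδ0 hB (fun τ => (h01 τ).1) hone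
  have hsupp : HasCompactSupport h := HasCompactSupport.intro (isCompact_closedBall 0 δ)
    fun τ hτ => hzero τ (by simpa using hτ)
  have hγ : IsSymbol 1 (fun τ => h τ + τ * tanh (B * τ)) := by
    have htanh : IsSymbol 1 (fun τ => τ * tanh (B * τ)) := by
      simpa using isSymbol_id.mul (isSymbol_tanh_const_mul hB.ne')
    exact (hsupp.isSymbol hsmooth 1).add htanh
  obtain ⟨C, hC⟩ := (hγ.rpow hc hlow p).bound k
  exact ⟨max C 1, by positivity, fun τ => (hC τ).trans (by gcongr; exact le_max_left _ _)⟩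

/-- One-dimensional radial symbol estimates of class `S^p` for powers of the
modified Dirichlet-to-Neumann symbol `γ(τ) = h(τ) + τ·tanh(B·τ)`:
for every real `p` and every `k : ℕ` there is `C > 0` with
`|d^k/dτ^k (γ(τ)^p)| ≤ C (1 + |τ|)^(p-k)` for all `τ`. -/
theorem stmt_6 (δ B : ℝ) (hδ0 : 0 < δ) (hδ1 : δ < 1) (hB : 0 < B)
    (h : ℝ → ℝ) (hsmooth : ContDiff ℝ (⊤ : ℕ∞) h)
    (h01 : ∀ τ, 0 ≤ h τ ∧ h τ ≤ 1)
    (hone : ∀ τ, |τ| ≤ δ / 2 → h τ = 1)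
    (hzero : ∀ τ, δ < |τ| → h τ = 0)
    (p : ℝ) (k : ℕ) :
    ∃ C : ℝ, 0 < C ∧ ∀ τ : ℝ,
      |iteratedDeriv k (fun τ : ℝ => (h τ + τ * Real.tanh (B * τ)) ^ p) τ|
        ≤ C * (1 + |τ|) ^ (p - (k : ℝ)) :=
  stmt_6_general δ B hδ0 hB h hsmooth h01 hone hzero p k
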